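/- Let μ₁ ≥ ... ≥ μ_k > 0, mₐ > 0, cᵢ ≥ 0, dₐ ≥ 0. Suppose δ⁺, δ⁻ ∈ (0, π/μ₁) satisfy Σᵢ μᵢ cᵢ [cot(μᵢ δ⁻) + cot(μᵢ δ⁺)] + Σₐ mₐ dₐ [coth(mₐ δ⁻) + coth(mₐ δ⁺)] = 0, with not all cᵢ, dₐ zero. Then δ⁺ + δ⁻ ≥ π/μ₁. -/

import Mathlib

/-! Suppose `δ⁺ + δ⁻ < π/μ₁`. Every `coth` term is positive, and since
`μᵢ (δ⁻ + δ⁺) ≤ μ₁ (δ⁻ + δ⁺) < π`, so is every `cot (μᵢ δ⁻) + cot (μᵢ δ⁺)`, by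
`cot x + cot y = sin (x + y) / (sin x sin y)`. Hence every summand is nonnegative and one with a
nonzero weight is positive, so the sum cannot vanish. -/

noncomputable def coth (x : ℝ) : ℝ := Real.cosh x / Real.sinh x

lemma coth_pos {x : ℝ} (hx : 0 < x) : 0 < coth x :=
  div_pos (Real.cosh_pos x) (Real.sinh_pos_iff.mpr hx)

lemma Real.cot_add_cot {x y : ℝ} (hx : Real.sin x ≠ 0) (hy : Real.sin y ≠ 0) :
    Real.cot x + Real.cot y = Real.sin (x + y) / (Real.sin x * Real.sin y) := by
  rw [Real.cot_eq_cos_div_sin, Real.cot_eq_cos_div_sin, div_add_div _ _ hx hy, Real.sin_add]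
  ring

lemma Real.cot_add_cot_pos {x y : ℝ} (hx : 0 < x) (hy : 0 < y) (hxy : x + y < Real.pi) :
    0 < Real.cot x + Real.cot y := by
  have hsx : 0 < Real.sin x := Real.sin_pos_of_pos_of_lt_pi hx (by linarith)
  have hsy : 0 < Real.sin y := Real.sin_pos_of_pos_of_lt_pi hy (by linarith)
  rw [Real.cot_add_cot hsx.ne' hsy.ne']
  exact div_pos (Real.sin_pos_of_pos_of_lt_pi (by linarith) hxy) (mul_pos hsx hsy)

lemma sum_add_sum_pos {ι κ : Type*} [Fintype ι] [Fintype κ] {f : ι → ℝ} {g : κ → ℝ}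
    (hf : ∀ i, 0 ≤ f i) (hg : ∀ a, 0 ≤ g a) (h : (∃ i, 0 < f i) ∨ ∃ a, 0 < g a) :
    0 < ∑ i, f i + ∑ a, g a := by
  have hF : 0 ≤ ∑ i, f i := Finset.sum_nonneg fun i _ => hf i
  have hG : 0 ≤ ∑ a, g a := Finset.sum_nonneg fun a _ => hg a
  rcases h with ⟨i, hi⟩ | ⟨a, ha⟩
  · exact add_pos_of_pos_of_nonneg (Finset.sum_pos' (fun j _ => hf j) ⟨i, by simp, hi⟩) hG
  · exact add_pos_of_nonneg_of_pos hF (Finset.sum_pos' (fun b _ => hg b) ⟨a, by simp, ha⟩)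

theorem delta_sum_ge (k l : ℕ) (hk : 0 < k)
    (μ : Fin k → ℝ) (m : Fin l → ℝ) (c : Fin k → ℝ) (d : Fin l → ℝ)
    (hμpos : ∀ i, 0 < μ i) (hμmono : ∀ i j : Fin k, i ≤ j → μ j ≤ μ i)
    (hm : ∀ a, 0 < m a) (hc : ∀ i, 0 ≤ c i) (hd : ∀ a, 0 ≤ d a)
    (hnz : (∃ i, 0 < c i) ∨ (∃ a, 0 < d a))
    (δp δm : ℝ)
    (hδp : δp ∈ Set.Ioo 0 (Real.pi / μ ⟨0, hk⟩))
    (hδm : δm ∈ Set.Ioo 0 (Real.pi / μ ⟨0, hk⟩))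
    (heq : (∑ i, μ i * c i * (Real.cot (μ i * δm) + Real.cot (μ i * δp))) +
      ∑ a, m a * d a * (coth (m a * δm) + coth (m a * δp)) = 0) :
    δp + δm ≥ Real.pi / μ ⟨0, hk⟩ := by
  by_contra! h
  have hlt : μ ⟨0, hk⟩ * (δm + δp) < Real.pi := by
    rw [← lt_div_iff₀' (hμpos _)]
    linarith
  have hcot : ∀ i, 0 < Real.cot (μ i * δm) + Real.cot (μ i * δp) := fun i =>
    Real.cot_add_cot_pos (mul_pos (hμpos i) hδm.1) (mul_pos (hμpos i) hδp.1) <| by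
      rw [← mul_add]
      exact (mul_le_mul_of_nonneg_right (hμmono _ i (Fin.mk_le_of_le_val (Nat.zero_le _)))
        (by linarith [hδm.1, hδp.1])).trans_lt hlt
  have hcoth : ∀ a, 0 < coth (m a * δm) + coth (m a * δp) := fun a =>
    add_pos (coth_pos (mul_pos (hm a) hδm.1)) (coth_pos (mul_pos (hm a) hδp.1))
  refine heq.not_gt (sum_add_sum_pos
    (fun i => mul_nonneg (mul_nonneg (hμpos i).le (hc i)) (hcot i).le)
    (fun a => mul_nonneg (mul_nonneg (hm a).le (hd a)) (hcoth a).le) ?_)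
  exact hnz.imp (fun ⟨i, hi⟩ => ⟨i, mul_pos (mul_pos (hμpos i) hi) (hcot i)⟩)
    (fun ⟨a, ha⟩ => ⟨a, mul_pos (mul_pos (hm a) ha) (hcoth a)⟩)
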